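/- arXiv:1201.0142 — 2 statements merged into one kernel-verified Lean document; each statement's English description precedes it below -/
import Mathlib

section
/- For every k ≥ 2, the number of sequences (c_1, d_1, c_2, d_2, …, c_k, d_k) of integers such that (i) c_1 = 1, (ii) c_2 = 2, (iii) d_k = 2k, (iv) {c_1, d_1, …, c_k, d_k} = {1, 2, …, 2k}, and (v) c_i < c_{i+1} < d_i < d_{i+1} for every 1 ≤ i ≤ k−1, equals the Catalan number C_{k−1} = (1/k)·binom(2k−2, k−1). -/
/-!
Let `A` and `B` be the sets of values of `c` and `d`. Condition (iv) makes them complementary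
`k`-subsets of `[1, 2k]`, enumerated increasingly by `c` and `d`, and (i)–(v) then say exactly
that every initial segment `[1, v)` with `2 ≤ v ≤ 2k` contains more elements of `A` than of `B`:
if `j` elements of `B` lie below `v`, then so do `c₀ < ⋯ < c_j` (using `c_j < d_{j-1}`).
Dropping `1 ∈ A` and `2k ∈ B` and reading `2, …, 2k - 1` as up-steps (in `A`) and down-steps
(in `B`), these sets are exactly the Dyck words of semilength `k - 1`.
-/

namespace Chains1324

open Finset DyckStep

lemma count_mem_eq_card {A : Finset ℕ} {M : ℕ} (hA : A ⊆ range M) :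
    Nat.count (· ∈ A) M = #A := by
  rw [Nat.count_eq_card_filter_range, filter_mem_eq_inter, inter_eq_right.mpr hA]

lemma count_mem_add_count_mem_sdiff {A : Finset ℕ} {M : ℕ} (hA : A ⊆ Icc 1 M) {v : ℕ}
    (hv : v ≤ M + 1) : Nat.count (· ∈ A) v + Nat.count (· ∈ Icc 1 M \ A) v = v - 1 := by
  induction v with
  | zero => simp
  | succ v ih =>
    have hvA : v ∈ A → 1 ≤ v := fun h => (mem_Icc.mp (hA h)).1
    rw [Nat.count_succ, Nat.count_succ, ← add_add_add_comm, ih (by omega)]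
    by_cases h : v ∈ A <;> simp only [h, mem_sdiff, mem_Icc] <;> split_ifs <;> grind

lemma _root_.StrictMono.lt_count_mem_image_iff {k : ℕ} {c : Fin k → ℕ} (hc : StrictMono c)
    (i : Fin k) (v : ℕ) : i < Nat.count (· ∈ univ.image c) v ↔ c i < v := by
  have hcount : Nat.count (· ∈ univ.image c) v = #(univ.filter (c · < v)) := by
    rw [Nat.count_eq_card_filter_range, ← card_image_of_injective _ hc.injective]
    congr 1
    ext x
    simp only [mem_filter, mem_range, mem_image, mem_univ, true_and]
    grind
  rw [hcount]
  constructor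
  · intro hi
    by_contra! hle
    have hsub : univ.filter (c · < v) ⊆ Iio i := fun j hj =>
      mem_Iio.mpr (hc.lt_iff_lt.mp ((mem_filter.mp hj).2.trans_le hle))
    have := card_le_card hsub
    rw [Fin.card_Iio] at this
    omega
  · intro hi
    have hsub : Iic i ⊆ univ.filter (c · < v) := fun j hj =>
      mem_filter.mpr ⟨mem_univ j, (hc.monotone (mem_Iic.mp hj)).trans_lt hi⟩
    have := card_le_card hsub
    rw [Fin.card_Iic] at this
    omega

lemma lt_count_mem_iff_orderEmbOfFin_lt {k : ℕ} (A : Finset ℕ) (h : #A = k) (i : Fin k)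
    (v : ℕ) : i < Nat.count (· ∈ A) v ↔ A.orderEmbOfFin h i < v := by
  simpa using (A.orderEmbOfFin h).strictMono.lt_count_mem_image_iff i v

lemma strictMono_of_lt_succ {α : Type*} [Preorder α] {k : ℕ} {f : Fin k → α}
    (h : ∀ (i : ℕ) (hi : i + 1 < k), f ⟨i, Nat.lt_of_succ_lt hi⟩ < f ⟨i + 1, hi⟩) :
    StrictMono f := by
  obtain _ | k := k
  · exact fun i => i.elim0
  · exact Fin.strictMono_iff_lt_succ.mpr fun i => h i (by omega)

def IsChain {k : ℕ} (hk : 2 ≤ k) (c d : Fin k → ℕ) : Prop :=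
  c ⟨0, Nat.zero_lt_two.trans_le hk⟩ = 1 ∧ c ⟨1, Nat.one_lt_two.trans_le hk⟩ = 2 ∧
    d ⟨k - 1, Nat.sub_one_lt_of_lt (Nat.zero_lt_two.trans_le hk)⟩ = 2 * k ∧
    Set.range c ∪ Set.range d = Set.Icc 1 (2 * k) ∧
    ∀ (i : ℕ) (h : i + 1 < k),
      c ⟨i, Nat.lt_of_succ_lt h⟩ < c ⟨i + 1, h⟩ ∧ c ⟨i + 1, h⟩ < d ⟨i, Nat.lt_of_succ_lt h⟩ ∧
        d ⟨i, Nat.lt_of_succ_lt h⟩ < d ⟨i + 1, h⟩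

def IsBallot (k : ℕ) (A : Finset ℕ) : Prop :=
  A ⊆ Ico 1 (2 * k) ∧ #A = k ∧ ∀ v ∈ Icc 2 (2 * k), v ≤ 2 * Nat.count (· ∈ A) v

namespace IsChain

variable {k : ℕ} {hk : 2 ≤ k} {c d : Fin k → ℕ}

lemma strictMono_left (h : IsChain hk c d) : StrictMono c :=
  strictMono_of_lt_succ fun i hi => (h.2.2.2.2 i hi).1

lemma strictMono_right (h : IsChain hk c d) : StrictMono d :=
  strictMono_of_lt_succ fun i hi => (h.2.2.2.2 i hi).2.2

lemma image_left_union_image_right (h : IsChain hk c d) :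
    univ.image c ∪ univ.image d = Icc 1 (2 * k) := by
  simpa [← coe_inj] using h.2.2.2.1

lemma image_right_eq_sdiff (h : IsChain hk c d) :
    univ.image d = Icc 1 (2 * k) \ univ.image c := by
  have hunion := h.image_left_union_image_right
  have hdisj : Disjoint (univ.image c) (univ.image d) := by
    rw [← card_union_eq_card_add_card, hunion,
      card_image_of_injective _ h.strictMono_left.injective,
      card_image_of_injective _ h.strictMono_right.injective, Nat.card_Icc, card_fin]
    omega
  rw [← hunion, union_sdiff_cancel_left hdisj]

lemma isBallot (h : IsChain hk c d) : IsBallot k (univ.image c) := by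
  have hc : StrictMono c := h.strictMono_left
  have hd : StrictMono d := h.strictMono_right
  have hA : univ.image c ⊆ Icc 1 (2 * k) := h.image_left_union_image_right ▸ subset_union_left
  have hsdiff := h.image_right_eq_sdiff
  obtain ⟨hc0, -, hd_last, -, hchain⟩ := h
  refine ⟨fun x hx => ?_, by rw [card_image_of_injective _ hc.injective, card_fin], ?_⟩
  · have h2k : 2 * k ∉ univ.image c := by
      rw [← hd_last]
      exact (mem_sdiff.mp (hsdiff ▸ mem_image_of_mem d (mem_univ _))).2
    have := mem_Icc.mp (hA hx)
    exact mem_Ico.mpr ⟨this.1, this.2.lt_of_ne (ne_of_mem_of_not_mem hx h2k)⟩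
  intro v hv
  rw [mem_Icc] at hv
  have hsum := count_mem_add_count_mem_sdiff hA (v := v) (by omega)
  rw [← hsdiff] at hsum
  suffices Nat.count (· ∈ univ.image d) v < Nat.count (· ∈ univ.image c) v by omega
  obtain hj | ⟨j, hj⟩ : Nat.count (· ∈ univ.image d) v = 0 ∨
      ∃ j, Nat.count (· ∈ univ.image d) v = j + 1 :=
    (Nat.eq_zero_or_eq_succ_pred _).imp id fun h => ⟨_, h⟩
  · rw [hj]
    exact (hc.lt_count_mem_image_iff ⟨0, by omega⟩ v).mpr (by omega)
  · have hjk : j + 1 < k := by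
      by_contra! hkj
      have := (hd.lt_count_mem_image_iff ⟨k - 1, by omega⟩ v).mp (by simp only; omega)
      omega
    have hdj : d ⟨j, by omega⟩ < v :=
      (hd.lt_count_mem_image_iff ⟨j, by omega⟩ v).mp (by simp only; omega)
    rw [hj]
    exact (hc.lt_count_mem_image_iff ⟨j + 1, hjk⟩ v).mpr ((hchain j hjk).2.1.trans hdj)

end IsChain

namespace IsBallot

variable {k : ℕ} {A : Finset ℕ}

lemma subset_Icc (hA : IsBallot k A) : A ⊆ Icc 1 (2 * k) :=
  hA.1.trans Ico_subset_Icc_self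

lemma card_sdiff (hA : IsBallot k A) : #(Icc 1 (2 * k) \ A) = k := by
  rw [card_sdiff_of_subset hA.subset_Icc, Nat.card_Icc, hA.2.1]
  omega

lemma orderEmbOfFin_sdiff_last (hk : 1 ≤ k) (hA : IsBallot k A) :
    (Icc 1 (2 * k) \ A).orderEmbOfFin hA.card_sdiff ⟨k - 1, by omega⟩ = 2 * k := by
  have h1 := hA.2.2 (2 * k) (by simp; omega)
  have h2 := count_mem_add_count_mem_sdiff hA.subset_Icc (v := 2 * k) (by omega)
  have h3 := mt (lt_count_mem_iff_orderEmbOfFin_lt _ hA.card_sdiff ⟨k - 1, by omega⟩ (2 * k)).mpr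
    (by simp only; omega)
  have := mem_Icc.mp (mem_sdiff.mp (orderEmbOfFin_mem _ hA.card_sdiff ⟨k - 1, by omega⟩)).1
  omega

lemma orderEmbOfFin_succ_lt_orderEmbOfFin_sdiff (hA : IsBallot k A) (i : ℕ) (hi : i + 1 < k) :
    A.orderEmbOfFin hA.2.1 ⟨i + 1, hi⟩ <
      (Icc 1 (2 * k) \ A).orderEmbOfFin hA.card_sdiff ⟨i, Nat.lt_of_succ_lt hi⟩ := by
  set c := A.orderEmbOfFin hA.2.1
  set d := (Icc 1 (2 * k) \ A).orderEmbOfFin hA.card_sdiff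
  have hcA : ∀ (j : Fin k) v, j < Nat.count (· ∈ A) v ↔ c j < v :=
    lt_count_mem_iff_orderEmbOfFin_lt A hA.2.1
  have hdB : ∀ (j : Fin k) v, j < Nat.count (· ∈ Icc 1 (2 * k) \ A) v ↔ d j < v :=
    lt_count_mem_iff_orderEmbOfFin_lt _ hA.card_sdiff
  have hdmem (j : Fin k) : d j ∈ Icc 1 (2 * k) \ A := orderEmbOfFin_mem _ _ j
  have hdi := mem_sdiff.mp (hdmem ⟨i, by omega⟩)
  have hdi_mem := mem_Icc.mp hdi.1
  have hdi_lt : d ⟨i, by omega⟩ < d ⟨i + 1, hi⟩ := d.strictMono (by simp)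
  have hdi_succ_le := (mem_Icc.mp (mem_sdiff.mp (hdmem ⟨i + 1, hi⟩)).1).2
  have hmajority := hA.2.2 (d ⟨i, by omega⟩ + 1) (by simp; omega)
  have hsum := count_mem_add_count_mem_sdiff hA.subset_Icc (v := d ⟨i, by omega⟩ + 1) (by omega)
  have hB := (hdB ⟨i, by omega⟩ (d ⟨i, by omega⟩ + 1)).mpr (by omega)
  have hle := (hcA ⟨i + 1, hi⟩ (d ⟨i, by omega⟩ + 1)).mp (by simp only at hB ⊢; omega)
  have hne : c ⟨i + 1, hi⟩ ≠ d ⟨i, by omega⟩ :=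
    ne_of_mem_of_not_mem (orderEmbOfFin_mem A hA.2.1 _) hdi.2
  omega

lemma isChain (hk : 2 ≤ k) (hA : IsBallot k A) :
    IsChain hk (A.orderEmbOfFin hA.2.1) ((Icc 1 (2 * k) \ A).orderEmbOfFin hA.card_sdiff) := by
  set c := A.orderEmbOfFin hA.2.1
  have hcA : ∀ (i : Fin k) v, i < Nat.count (· ∈ A) v ↔ c i < v :=
    lt_count_mem_iff_orderEmbOfFin_lt A hA.2.1
  have hc_ge (i : Fin k) : 1 ≤ c i := (mem_Ico.mp (hA.1 (orderEmbOfFin_mem A hA.2.1 i))).1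
  have hc0 : c ⟨0, by omega⟩ = 1 := by
    have := (hcA ⟨0, by omega⟩ 2).mp (by have := hA.2.2 2 (by simp; omega); simp only; omega)
    have := hc_ge ⟨0, by omega⟩
    omega
  have hc1 : c ⟨1, by omega⟩ = 2 := by
    have := (hcA ⟨1, by omega⟩ 3).mp (by have := hA.2.2 3 (by simp; omega); simp only; omega)
    have : c ⟨0, by omega⟩ < c ⟨1, by omega⟩ := c.strictMono (by simp)
    omega
  refine ⟨hc0, hc1, hA.orderEmbOfFin_sdiff_last (by omega), ?_, fun i hi =>
    ⟨c.strictMono (by simp), hA.orderEmbOfFin_succ_lt_orderEmbOfFin_sdiff i hi,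
      OrderEmbedding.strictMono _ (by simp)⟩⟩
  rw [range_orderEmbOfFin, range_orderEmbOfFin, ← coe_union,
    union_sdiff_of_subset hA.subset_Icc, coe_Icc]

end IsBallot

def chainEquivBallot {k : ℕ} (hk : 2 ≤ k) :
    {cd : (Fin k → ℕ) × (Fin k → ℕ) // IsChain hk cd.1 cd.2} ≃ {A : Finset ℕ // IsBallot k A} where
  toFun cd := ⟨univ.image cd.1.1, cd.2.isBallot⟩
  invFun A := ⟨(A.1.orderEmbOfFin A.2.2.1, (Icc 1 (2 * k) \ A.1).orderEmbOfFin A.2.card_sdiff),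
    A.2.isChain hk⟩
  left_inv := fun ⟨(c, d), h⟩ => by
    refine Subtype.ext (Prod.ext ?_ ?_)
    · exact (orderEmbOfFin_unique _ (fun i => mem_image_of_mem c (mem_univ i))
        h.strictMono_left).symm
    · exact (orderEmbOfFin_unique _ (fun i => h.image_right_eq_sdiff ▸ mem_image_of_mem d
        (mem_univ i)) h.strictMono_right).symm
  right_inv A := Subtype.ext (image_orderEmbOfFin_univ _ _)

lemma count_U_add_count_D (l : List DyckStep) : l.count U + l.count D = l.length := by
  induction l with
  | nil => rfl
  | cons s l ih => cases s <;> simp <;> omega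

def toWord (n : ℕ) (A : Finset ℕ) : List DyckStep :=
  (List.range (2 * n)).map fun j => if j + 2 ∈ A then U else D

def ofWord (w : List DyckStep) : Finset ℕ :=
  (Ico 1 (w.length + 2)).filter fun v => v = 1 ∨ w.getD (v - 2) D = U

lemma length_toWord (n : ℕ) (A : Finset ℕ) : (toWord n A).length = 2 * n := by
  simp [toWord]

lemma getD_toWord (n : ℕ) (A : Finset ℕ) (j : ℕ) :
    (toWord n A).getD j D = if j < 2 * n ∧ j + 2 ∈ A then U else D := by
  by_cases hj : j < 2 * n <;> by_cases hA : j + 2 ∈ A <;>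
    simp [toWord, List.getD_eq_getElem?_getD, hj, hA]

lemma count_U_take_toWord (n : ℕ) (A : Finset ℕ) (m : ℕ) :
    ((toWord n A).take m).count U = Nat.count (fun j => j + 2 ∈ A) (min m (2 * n)) := by
  rw [toWord, ← List.map_take, List.take_range, List.count_eq_countP, List.countP_map, Nat.count]
  congr 1
  ext j
  by_cases h : j + 2 ∈ A <;> simp [h]

lemma count_U_take_toWord_add_one {n : ℕ} {A : Finset ℕ} (h0 : 0 ∉ A) (h1 : 1 ∈ A) (m : ℕ) :
    ((toWord n A).take m).count U + 1 = Nat.count (· ∈ A) (min m (2 * n) + 2) := by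
  rw [count_U_take_toWord, add_comm _ 2, Nat.count_add]
  simp [Nat.count_succ, h0, h1, add_comm]

lemma toWord_ofWord {n : ℕ} {w : List DyckStep} (hw : w.length = 2 * n) :
    toWord n (ofWord w) = w := by
  refine List.ext_getElem (by rw [length_toWord, hw]) fun j hj hj' => ?_
  rw [← List.getD_eq_getElem _ D hj, ← List.getD_eq_getElem _ D hj', getD_toWord]
  rw [length_toWord] at hj
  have hmem : j + 2 ∈ ofWord w ↔ w.getD j D = U := by simp [ofWord, hw, hj]
  simp only [hmem, hj, true_and]
  split_ifs with h
  exacts [h.symm, ((w.getD j D).dichotomy.resolve_left h).symm]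

namespace IsBallot

variable {n : ℕ} {A : Finset ℕ}

lemma zero_notMem (hA : IsBallot (n + 1) A) : 0 ∉ A := fun h => by simpa using hA.1 h

lemma one_mem (hA : IsBallot (n + 1) A) : 1 ∈ A := by
  have := hA.2.2 2 (by simp)
  simp only [Nat.count_succ, Nat.count_zero, hA.zero_notMem] at this
  by_contra h
  simp [h] at this

lemma count_U_toWord (hA : IsBallot (n + 1) A) : (toWord n A).count U = n := by
  have h := count_U_take_toWord_add_one (n := n) hA.zero_notMem hA.one_mem (2 * n)
  rw [List.take_of_length_le (length_toWord n A).le, min_self,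
    count_mem_eq_card fun x hx => mem_range.mpr (by have := mem_Ico.mp (hA.1 hx); omega),
    hA.2.1] at h
  omega

def toDyckWord (hA : IsBallot (n + 1) A) : DyckWord where
  toList := toWord n A
  count_U_eq_count_D := by
    have h := count_U_add_count_D (toWord n A)
    rw [length_toWord, hA.count_U_toWord] at h
    rw [hA.count_U_toWord]
    omega
  count_D_le_count_U m := by
    have h1 := count_U_add_count_D ((toWord n A).take m)
    have h2 := count_U_take_toWord_add_one (n := n) hA.zero_notMem hA.one_mem m
    have h3 := hA.2.2 (min m (2 * n) + 2) (by simp; omega)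
    rw [List.length_take, length_toWord] at h1
    omega

lemma ofWord_toWord (hA : IsBallot (n + 1) A) : ofWord (toWord n A) = A := by
  ext v
  simp only [ofWord, mem_filter, mem_Ico, length_toWord, getD_toWord]
  constructor
  · rintro ⟨hv, h⟩
    rcases eq_or_ne v 1 with rfl | hv1
    · exact hA.one_mem
    · have h' := h.resolve_left hv1
      split_ifs at h' with hmem
      rw [Nat.sub_add_cancel (by omega)] at hmem
      exact hmem.2
  · intro h
    have := mem_Ico.mp (hA.1 h)
    refine ⟨by omega, ?_⟩
    rcases eq_or_ne v 1 with rfl | hv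
    · exact .inl rfl
    · exact .inr (if_pos ⟨by omega, by rwa [Nat.sub_add_cancel (by omega)]⟩)

end IsBallot

lemma isBallot_ofWord {n : ℕ} (p : DyckWord) (hp : p.semilength = n) :
    IsBallot (n + 1) (ofWord p.toList) := by
  have hlen : p.toList.length = 2 * n := by rw [← p.two_mul_semilength_eq_length, hp]
  have hsub : ofWord p.toList ⊆ Ico 1 (2 * (n + 1)) := fun v hv => by
    have := mem_Ico.mp (mem_filter.mp hv).1
    rw [mem_Ico]
    omega
  have hcount (m : ℕ) := count_U_take_toWord_add_one (n := n) (A := ofWord p.toList)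
    (by simp [ofWord]) (by simp [ofWord]) m
  rw [toWord_ofWord hlen] at hcount
  refine ⟨hsub, ?_, fun v hv => ?_⟩
  · have h := hcount (2 * n)
    rw [min_self] at h
    rw [← count_mem_eq_card (M := 2 * n + 2) fun x hx => mem_range.mpr (by
      have := mem_Ico.mp (hsub hx); omega), ← h, List.take_of_length_le hlen.le]
    rw [DyckWord.semilength] at hp
    omega
  · rw [mem_Icc] at hv
    have h1 := hcount (v - 2)
    have h2 := count_U_add_count_D (p.toList.take (v - 2))
    have h3 := p.count_D_le_count_U (v - 2)
    rw [List.length_take, hlen] at h2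
    rw [show min (v - 2) (2 * n) + 2 = v by omega] at h1
    omega

def ballotEquivDyckWord (n : ℕ) :
    {A : Finset ℕ // IsBallot (n + 1) A} ≃ {p : DyckWord // p.semilength = n} where
  toFun A := ⟨A.2.toDyckWord, A.2.count_U_toWord⟩
  invFun p := ⟨ofWord p.1.toList, isBallot_ofWord p.1 p.2⟩
  left_inv A := Subtype.ext A.2.ofWord_toWord
  right_inv p := Subtype.ext (DyckWord.ext (toWord_ofWord (by
    rw [← p.1.two_mul_semilength_eq_length, p.2])))

end Chains1324

open Chains1324 in
/-- For `k ≥ 2`, the number of sequences `(c₁,d₁,c₂,d₂,…,c_k,d_k)` of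
integers with (i) `c₁ = 1`, (ii) `c₂ = 2`, (iii) `d_k = 2k`, (iv) whose set of values is
`{1,…,2k}`, and (v) `cᵢ < cᵢ₊₁ < dᵢ < dᵢ₊₁` for `1 ≤ i ≤ k-1`, equals the Catalan number
`C_{k-1}`.  (Here `c = cd.1` and `d = cd.2`, 0-indexed.) -/
theorem count_1324_chains_eq_catalan (k : ℕ) (hk : 2 ≤ k) :
    Nat.card {cd : (Fin k → ℕ) × (Fin k → ℕ) //
      cd.1 ⟨0, by omega⟩ = 1 ∧ cd.1 ⟨1, by omega⟩ = 2 ∧ cd.2 ⟨k - 1, by omega⟩ = 2 * k ∧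
      Set.range cd.1 ∪ Set.range cd.2 = Set.Icc 1 (2 * k) ∧
      ∀ (i : ℕ) (h : i + 1 < k),
        cd.1 ⟨i, by omega⟩ < cd.1 ⟨i + 1, h⟩ ∧
        cd.1 ⟨i + 1, h⟩ < cd.2 ⟨i, by omega⟩ ∧
        cd.2 ⟨i, by omega⟩ < cd.2 ⟨i + 1, h⟩}
    = catalan (k - 1) := by
  obtain ⟨n, rfl⟩ : ∃ n, k = n + 1 := ⟨k - 1, by omega⟩
  calc Nat.card {cd : (Fin (n + 1) → ℕ) × (Fin (n + 1) → ℕ) // IsChain hk cd.1 cd.2}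
      = Nat.card {p : DyckWord // p.semilength = n} :=
        Nat.card_congr ((chainEquivBallot hk).trans (ballotEquivDyckWord n))
    _ = catalan n := by
        rw [Nat.card_eq_fintype_card, DyckWord.card_dyckWord_semilength_eq_catalan]
end

section
/- Let p ≥ 4 and n ≥ 1. The number of permutations σ ∈ S_n with no 1324⋯p-match, exactly one left-to-right minimum (equivalently, σ_1 = 1), and exactly one descent equals 2^{n−1} − n if n < p, and equals 2^{n−1} − 2n + p − 1 if n ≥ p. -/
open scoped Classical

noncomputable section

/-- The number of descents of a permutation of `Fin n` (one-line notation). -/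
def desNum {n : ℕ} (σ : Equiv.Perm (Fin n)) : ℕ :=
  (Finset.univ.filter fun i : Fin (n - 1) =>
    σ ⟨(i : ℕ) + 1, by have := i.isLt; omega⟩ < σ ⟨(i : ℕ), by have := i.isLt; omega⟩).card

/-- The number of left-to-right minima of a permutation of `Fin n`. -/
def lrMin {n : ℕ} (σ : Equiv.Perm (Fin n)) : ℕ :=
  (Finset.univ.filter fun j : Fin n => ∀ i : Fin n, i < j → σ j < σ i).card

/-- `σ` has a (consecutive) `τ`-match: some window of `j` consecutive entries of `σ`
in one-line notation reduces to `τ`, i.e. is order-isomorphic to `τ`. -/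
def HasMatch {j n : ℕ} (τ : Equiv.Perm (Fin j)) (σ : Equiv.Perm (Fin n)) : Prop :=
  ∃ (i : ℕ) (h : i + j ≤ n), ∀ a b : Fin j,
    (σ ⟨i + (a : ℕ), by have := a.isLt; omega⟩ < σ ⟨i + (b : ℕ), by have := b.isLt; omega⟩
      ↔ τ a < τ b)

/-- The pattern `1 3 2 4 5 ⋯ p ∈ S_p`: in (0-indexed) one-line notation, the identity
with the values in positions 1 and 2 interchanged. -/
def tau132 (p : ℕ) (hp : 2 < p) : Equiv.Perm (Fin p) :=
  Equiv.swap ⟨1, by omega⟩ ⟨2, by omega⟩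

/-! A permutation `σ` with `σ 0 = 0` and a single descent, at position `k`, lists a set `A ∋ 0`
of size `k + 1` increasingly and then its complement increasingly; conversely every `A ∋ 0`
that is not an initial segment arises this way, exactly once. This gives `2 ^ (n - 1) - n`
permutations.

The pattern `1324⋯p` has a single descent, so a match must sit on the descent `k` of `σ`, and
it forces `σ (k - 1) < σ (k + 1) < σ k < σ (k + 2)`. Then `σ` composed with the transposition of
the positions `k, k + 1` has no descent at all, so it is the identity: the matched permutations
are the adjacent transpositions `(k k+1)` with `1 ≤ k` and `k + p ≤ n + 1`, and there are
`n + 1 - p` of them. -/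

namespace OneDescent

open Finset Equiv

variable {n : ℕ}

/-- One-line notation indexed by `ℕ` (with the junk value `0` from position `n` on), so that
positions can be shifted by plain natural-number arithmetic. -/
def entry (σ : Perm (Fin n)) (t : ℕ) : ℕ :=
  if h : t < n then σ ⟨t, h⟩ else 0

lemma entry_of_lt (σ : Perm (Fin n)) {t : ℕ} (h : t < n) : entry σ t = σ ⟨t, h⟩ := dif_pos h

lemma entry_injOn (σ : Perm (Fin n)) : Set.InjOn (entry σ) (Set.Iio n) := by
  intro s hs t ht hst
  rw [entry_of_lt σ hs, entry_of_lt σ ht] at hst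
  exact congrArg Fin.val (σ.injective (Fin.ext hst))

lemma entry_mul (σ τ : Perm (Fin n)) {t : ℕ} (h : t < n) :
    entry (σ * τ) t = entry σ (entry τ t) := by
  rw [entry_of_lt _ h, entry_of_lt _ h, entry_of_lt _ (Fin.isLt _)]; rfl

lemma entry_swap (a b : Fin n) {t : ℕ} (h : t < n) :
    entry (swap a b) t = swap (a : ℕ) b t := by
  rw [entry_of_lt _ h]
  exact (Fin.val_injective.swap_apply a b ⟨t, h⟩).symm

def descents (σ : Perm (Fin n)) : Finset ℕ :=
  (range (n - 1)).filter fun i => entry σ (i + 1) < entry σ i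

lemma mem_descents {σ : Perm (Fin n)} {i : ℕ} :
    i ∈ descents σ ↔ i + 1 < n ∧ entry σ (i + 1) < entry σ i := by
  simp only [descents, mem_filter, mem_range]; omega

lemma entry_lt_entry_succ {σ : Perm (Fin n)} {i : ℕ} (h : i + 1 < n) (hi : i ∉ descents σ) :
    entry σ i < entry σ (i + 1) := by
  rw [mem_descents] at hi
  refine lt_of_le_of_ne (not_lt.1 fun h' => hi ⟨h, h'⟩) fun he => ?_
  have := entry_injOn σ (Set.mem_Iio.2 (by omega : i < n)) (Set.mem_Iio.2 h) he
  omega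

lemma desNum_eq_card_descents (σ : Perm (Fin n)) : desNum σ = #(descents σ) := by
  refine card_bij (fun i _ => (i : ℕ)) (fun i hi => ?_) (fun i _ j _ h => Fin.ext h) fun i hi => ?_
  · simp only [mem_filter, mem_univ, true_and] at hi
    rw [mem_descents, entry_of_lt _ (by omega), entry_of_lt _ (by omega)]
    exact ⟨by omega, hi⟩
  · obtain ⟨h, hi⟩ := mem_descents.1 hi
    refine ⟨⟨i, by omega⟩, ?_, rfl⟩
    simp only [mem_filter, mem_univ, true_and]
    rwa [entry_of_lt _ h, entry_of_lt _ (by omega)] at hi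

lemma entry_lt_entry_of_forall_notMem_descents {σ : Perm (Fin n)} {s t : ℕ} (hst : s < t)
    (ht : t < n) (h : ∀ i, s ≤ i → i < t → i ∉ descents σ) : entry σ s < entry σ t := by
  induction t, hst using Nat.le_induction with
  | base => exact entry_lt_entry_succ ht (h s le_rfl (by omega))
  | succ t hst ih =>
    exact (ih (by omega) fun i hi hit => h i hi (by omega)).trans
      (entry_lt_entry_succ ht (h t (by omega) (by omega)))

lemma eq_one_of_descents_eq_empty {σ : Perm (Fin n)} (h : descents σ = ∅) : σ = 1 := by
  have hmono : StrictMono σ := fun i j hij => by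
    have := entry_lt_entry_of_forall_notMem_descents (σ := σ) hij j.isLt (by simp [h])
    rwa [entry_of_lt _ i.isLt, entry_of_lt _ j.isLt] at this
  exact Equiv.ext (congrFun hmono.eq_id)

lemma descents_one : descents (1 : Perm (Fin n)) = ∅ := by
  ext i
  simp only [mem_descents, notMem_empty, iff_false, not_and, not_lt]
  intro h
  rw [entry_of_lt _ h, entry_of_lt _ (by omega)]
  simp

lemma lrMin_eq_one_iff [NeZero n] (σ : Perm (Fin n)) : lrMin σ = 1 ↔ σ 0 = 0 := by
  set L := univ.filter fun j : Fin n => ∀ i, i < j → σ j < σ i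
  have hzero : 0 ∈ L := by simp [L]
  have hmin : σ.symm 0 ∈ L := by
    simp only [L, mem_filter, mem_univ, true_and, apply_symm_apply]
    exact fun i hi => Fin.pos_iff_ne_zero.2 fun h => hi.ne (by rw [← h, symm_apply_apply])
  change #L = 1 ↔ _
  constructor
  · intro h
    exact (σ.symm_apply_eq.1 (card_le_one.1 h.le _ hmin _ hzero)).symm
  · intro h
    refine card_eq_one.2 ⟨0, eq_singleton_iff_unique_mem.2 ⟨hzero, fun j hj => ?_⟩⟩
    by_contra hj0
    have := (mem_filter.1 hj).2 0 (Fin.pos_iff_ne_zero.2 hj0)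
    exact Fin.not_lt_zero _ (h ▸ this)

lemma tau132_apply_val {p : ℕ} (hp : 2 < p) (a : Fin p) :
    (tau132 p hp a : ℕ) = swap 1 2 (a : ℕ) :=
  (Fin.val_injective.swap_apply _ _ a).symm

lemma hasMatch_tau132_iff {p : ℕ} (hp : 2 < p) (σ : Perm (Fin n)) :
    HasMatch (tau132 p hp) σ ↔ ∃ i, i + p ≤ n ∧ ∀ a < p, ∀ b < p,
      (entry σ (i + a) < entry σ (i + b) ↔ swap 1 2 a < swap 1 2 b) := by
  refine exists_congr fun i => ⟨fun ⟨h, hw⟩ => ⟨h, fun a ha b hb => ?_⟩,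
    fun ⟨h, hw⟩ => ⟨h, fun a b => ?_⟩⟩
  · rw [entry_of_lt _ (by omega), entry_of_lt _ (by omega), ← tau132_apply_val hp ⟨a, ha⟩,
      ← tau132_apply_val hp ⟨b, hb⟩]
    exact hw ⟨a, ha⟩ ⟨b, hb⟩
  · have := hw a a.isLt b b.isLt
    rwa [entry_of_lt _ (by omega), entry_of_lt _ (by omega), ← tau132_apply_val hp,
      ← tau132_apply_val hp] at this

lemma swap_add_one_apply_sub_one_add {k : ℕ} (hk : 1 ≤ k) (a : ℕ) :
    swap k (k + 1) (k - 1 + a) = k - 1 + swap 1 2 a := by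
  simp only [swap_apply_def]
  split_ifs <;> omega

lemma hasMatch_swap {p k : ℕ} (hp : 2 < p) (hk : 1 ≤ k) (hkp : k + p ≤ n + 1) :
    HasMatch (tau132 p hp) (swap (⟨k, by omega⟩ : Fin n) ⟨k + 1, by omega⟩) := by
  refine (hasMatch_tau132_iff _ _).2 ⟨k - 1, by omega, fun a ha b hb => ?_⟩
  rw [entry_swap _ _ (by omega), entry_swap _ _ (by omega)]
  simp only [swap_add_one_apply_sub_one_add hk]
  omega

lemma descents_swap {k : ℕ} (hk : k + 1 < n) :
    descents (swap (⟨k, by omega⟩ : Fin n) ⟨k + 1, hk⟩) = {k} := by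
  ext i
  rw [mem_descents, mem_singleton]
  constructor
  · rintro ⟨hi, hd⟩
    rw [entry_swap _ _ hi, entry_swap _ _ (by omega)] at hd
    simp only [swap_apply_def] at hd
    split_ifs at hd <;> omega
  · rintro rfl
    refine ⟨hk, ?_⟩
    rw [entry_swap _ _ hk, entry_swap _ _ (by omega)]
    simp

lemma swap_apply_zero [NeZero n] {k : ℕ} (hk : 1 ≤ k) (hkn : k + 1 < n) :
    swap (⟨k, by omega⟩ : Fin n) ⟨k + 1, hkn⟩ 0 = 0 :=
  swap_apply_of_ne_of_ne (Fin.ne_of_val_ne (by simp only [Fin.val_zero]; omega))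
    (Fin.ne_of_val_ne (by simp only [Fin.val_zero]; omega))

lemma lt_comp_swap_succ {f : ℕ → ℕ} {k m t : ℕ} (ht : t + 1 < m)
    (hasc : ∀ s, s + 1 < m → s ≠ k → f s < f (s + 1))
    (h₁ : f (k - 1) < f (k + 1)) (h₂ : f (k + 1) < f k) (h₃ : f k < f (k + 2)) (hk : 1 ≤ k) :
    f (swap k (k + 1) t) < f (swap k (k + 1) (t + 1)) := by
  obtain h | rfl | rfl | rfl | h : t + 1 < k ∨ t + 1 = k ∨ t = k ∨ t = k + 1 ∨ k + 2 ≤ t := by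
    omega
  · rw [swap_apply_of_ne_of_ne (by omega) (by omega),
      swap_apply_of_ne_of_ne (by omega) (by omega)]
    exact hasc t ht (by omega)
  · rw [swap_apply_of_ne_of_ne (by omega) (by omega), swap_apply_left]
    simpa using h₁
  · rw [swap_apply_left, swap_apply_right]
    exact h₂
  · rw [swap_apply_right, swap_apply_of_ne_of_ne (by omega) (by omega)]
    exact h₃
  · rw [swap_apply_of_ne_of_ne (by omega) (by omega),
      swap_apply_of_ne_of_ne (by omega) (by omega)]
    exact hasc t ht (by omega)

lemma eq_swap_of_hasMatch {p k : ℕ} (hp : 4 ≤ p) {σ : Perm (Fin n)} (hd : descents σ = {k})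
    (hm : HasMatch (tau132 p (by omega)) σ) :
    ∃ hkp : k + p ≤ n + 1, 1 ≤ k ∧ σ = swap (⟨k, by omega⟩ : Fin n) ⟨k + 1, by omega⟩ := by
  obtain ⟨i, hin, hw⟩ := (hasMatch_tau132_iff _ σ).1 hm
  have hw21 : entry σ (i + 2) < entry σ (i + 1) := (hw 2 (by omega) 1 (by omega)).2 (by decide)
  have hw02 : entry σ i < entry σ (i + 2) := (hw 0 (by omega) 2 (by omega)).2 (by decide)
  have hw13 : entry σ (i + 1) < entry σ (i + 3) := (hw 1 (by omega) 3 (by omega)).2 (by decide)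
  obtain rfl : i + 1 = k := by
    simpa [hd] using mem_descents.2 ⟨by omega, hw21⟩
  have hasc (t : ℕ) (ht : t + 1 < n) (hti : t ≠ i + 1) : entry σ t < entry σ (t + 1) :=
    entry_lt_entry_succ ht (by simpa [hd])
  refine ⟨by omega, by omega, ?_⟩
  rw [← swap_inv]
  refine eq_inv_of_mul_eq_one_left (eq_one_of_descents_eq_empty ?_)
  refine eq_empty_of_forall_notMem fun t ht => ?_
  obtain ⟨ht, hlt⟩ := mem_descents.1 ht
  rw [entry_mul _ _ ht, entry_mul _ _ (by omega), entry_swap _ _ ht,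
    entry_swap _ _ (by omega)] at hlt
  exact lt_asymm hlt
    (lt_comp_swap_succ (k := i + 1) ht hasc (by simpa using hw02) hw21 hw13 (by omega))

def initSeg (n m : ℕ) : Finset (Fin n) := univ.filter fun v => (v : ℕ) < m

lemma mem_initSeg {m : ℕ} {v : Fin n} : v ∈ initSeg n m ↔ (v : ℕ) < m := by
  simp [initSeg]

lemma card_initSeg {m : ℕ} (h : m ≤ n) : #(initSeg n m) = m := by
  simp [initSeg, Fin.card_filter_val_lt, h]

lemma card_compl_fin (A : Finset (Fin n)) : #Aᶜ = n - #A := by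
  simp [card_compl]

def twoRunFun (A : Finset (Fin n)) (i : Fin n) : Fin n :=
  if h : (i : ℕ) < #A then A.orderEmbOfFin rfl ⟨i, h⟩
  else Aᶜ.orderEmbOfFin (card_compl_fin A) ⟨i - #A, by omega⟩

lemma twoRunFun_mem_iff (A : Finset (Fin n)) (i : Fin n) :
    twoRunFun A i ∈ A ↔ (i : ℕ) < #A := by
  unfold twoRunFun
  split_ifs with h
  · simp [h]
  · simpa [h] using mem_compl.1 (Aᶜ.orderEmbOfFin_mem (card_compl_fin A) _)

lemma twoRunFun_injective (A : Finset (Fin n)) : Function.Injective (twoRunFun A) := by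
  intro i j hij
  have hside : (i : ℕ) < #A ↔ (j : ℕ) < #A := by
    rw [← twoRunFun_mem_iff, ← twoRunFun_mem_iff, hij]
  unfold twoRunFun at hij
  by_cases hi : (i : ℕ) < #A
  · rw [dif_pos hi, dif_pos (hside.1 hi)] at hij
    exact Fin.ext (Fin.mk.inj_iff.1 ((A.orderEmbOfFin rfl).injective hij))
  · rw [dif_neg hi, dif_neg (hside.not.1 hi)] at hij
    have := Fin.mk.inj_iff.1 ((Aᶜ.orderEmbOfFin (card_compl_fin A)).injective hij)
    omega

def twoRunPerm (A : Finset (Fin n)) : Perm (Fin n) :=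
  Equiv.ofBijective (twoRunFun A) (Finite.injective_iff_bijective.1 (twoRunFun_injective A))

/-- `σ` is the increasing arrangement of `A` followed by the increasing arrangement of `Aᶜ`. -/
def IsTwoRun (A : Finset (Fin n)) (σ : Perm (Fin n)) : Prop :=
  (∀ i, σ i ∈ A ↔ (i : ℕ) < #A) ∧ ∀ i ∈ descents σ, i + 1 = #A

lemma isTwoRun_twoRunPerm (A : Finset (Fin n)) : IsTwoRun A (twoRunPerm A) := by
  refine ⟨twoRunFun_mem_iff A, fun i hi => ?_⟩
  obtain ⟨hi, hlt⟩ := mem_descents.1 hi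
  by_contra hne
  rw [entry_of_lt _ hi, entry_of_lt _ (by omega)] at hlt
  change twoRunFun A _ < twoRunFun A _ at hlt
  unfold twoRunFun at hlt
  rcases lt_or_gt_of_ne hne with h | h
  · rw [dif_pos (show i + 1 < #A from h), dif_pos (show i < #A by omega),
      (A.orderEmbOfFin rfl).lt_iff_lt, Fin.mk_lt_mk] at hlt
    dsimp only at hlt
    omega
  · rw [dif_neg (show ¬ i + 1 < #A by omega), dif_neg (show ¬ i < #A by omega),
      OrderEmbedding.lt_iff_lt, Fin.mk_lt_mk] at hlt
    dsimp only at hlt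
    omega

lemma isTwoRun_one_iff {A : Finset (Fin n)} : IsTwoRun A 1 ↔ A = initSeg n #A := by
  simp [IsTwoRun, descents_one, Finset.ext_iff, mem_initSeg]

namespace IsTwoRun

variable {A : Finset (Fin n)} {σ : Perm (Fin n)}

lemma entry_lt_entry (h : IsTwoRun A σ) {s t : ℕ} (hst : s < t) (ht : t < n)
    (hrun : t < #A ∨ #A ≤ s) : entry σ s < entry σ t :=
  entry_lt_entry_of_forall_notMem_descents hst ht fun u hsu hut hu => by
    have := h.2 u hu
    omega

lemma eq_twoRunPerm (h : IsTwoRun A σ) : σ = twoRunPerm A := by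
  have hA : #A ≤ n := by simpa using card_le_univ A
  have hfst : (fun j : Fin #A => σ ⟨j, by omega⟩) = A.orderEmbOfFin rfl := by
    refine orderEmbOfFin_unique rfl (fun j => (h.1 _).2 j.isLt) fun x y hxy => ?_
    have := h.entry_lt_entry hxy (by omega) (Or.inl y.isLt)
    rwa [entry_of_lt _ (by omega), entry_of_lt _ (by omega)] at this
  have hsnd : (fun j : Fin (n - #A) => σ ⟨#A + j, by omega⟩)
      = Aᶜ.orderEmbOfFin (card_compl_fin A) := by
    refine orderEmbOfFin_unique _ (fun j => mem_compl.2 fun hj => ?_) fun x y hxy => ?_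
    · have := (h.1 _).1 hj
      dsimp only at this
      omega
    · have := h.entry_lt_entry (s := #A + x) (t := #A + y) (by simpa using hxy) (by omega)
        (Or.inr (by omega))
      rwa [entry_of_lt _ (by omega), entry_of_lt _ (by omega)] at this
  ext i
  change _ = (twoRunFun A i : ℕ)
  unfold twoRunFun
  split_ifs with hi
  · rw [← hfst]
  · rw [← hsnd]
    exact congrArg (fun j => (σ j : ℕ)) (Fin.ext (by dsimp only; omega))

lemma apply_zero [NeZero n] (h : IsTwoRun A σ) (h0 : 0 ∈ A) : σ 0 = 0 := by
  have hpos : ((σ.symm 0 : Fin n) : ℕ) < #A := (h.1 _).1 (by simpa using h0)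
  by_contra hne
  have hlt := h.entry_lt_entry (s := 0) (t := σ.symm 0)
    (Fin.pos_iff_ne_zero.2 fun h' => hne (σ.symm_apply_eq.1 h').symm) (Fin.isLt _)
    (Or.inl hpos)
  rw [entry_of_lt _ (Fin.isLt _)] at hlt
  simp at hlt

lemma mem_iff (h : IsTwoRun A σ) (v : Fin n) : v ∈ A ↔ ((σ.symm v : Fin n) : ℕ) < #A := by
  simpa using h.1 (σ.symm v)

lemma descents_eq (h : IsTwoRun A σ) (hA : A ≠ initSeg n #A) : descents σ = {#A - 1} := by
  obtain ⟨i, hi⟩ := nonempty_iff_ne_empty.2 fun he =>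
    hA (isTwoRun_one_iff.1 (eq_one_of_descents_eq_empty he ▸ h))
  have hi' := h.2 i hi
  refine eq_singleton_iff_unique_mem.2 ⟨?_, fun j hj => ?_⟩
  · rwa [← hi', Nat.add_sub_cancel]
  · have := h.2 j hj
    omega

end IsTwoRun

lemma exists_isTwoRun {σ : Perm (Fin n)} {k : ℕ} (h : descents σ = {k}) :
    ∃ A, IsTwoRun A σ := by
  have hk : k + 1 < n := (mem_descents.1 (h ▸ mem_singleton_self k)).1
  have hcard : #((initSeg n (k + 1)).map σ.toEmbedding) = k + 1 := by
    rw [card_map, card_initSeg hk.le]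
  refine ⟨(initSeg n (k + 1)).map σ.toEmbedding, fun i => ?_, fun i hi => ?_⟩
  · simp [hcard, mem_initSeg]
  · rw [h, mem_singleton] at hi
    rw [hcard, hi]

section Counting

variable [NeZero n]

lemma card_apply_zero_desNum_eq_one :
    #{σ : Perm (Fin n) | σ 0 = 0 ∧ desNum σ = 1}
      = #{A : Finset (Fin n) | 0 ∈ A ∧ A ≠ initSeg n #A} := by
  refine (card_bij (fun A _ => twoRunPerm A) (fun A hA => ?_) (fun A hA B hB hAB => ?_)
    fun σ hσ => ?_).symm
  · simp only [mem_filter, mem_univ, true_and] at hA ⊢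
    have h := isTwoRun_twoRunPerm A
    exact ⟨h.apply_zero hA.1, by rw [desNum_eq_card_descents, h.descents_eq hA.2, card_singleton]⟩
  · simp only [mem_filter, mem_univ, true_and] at hA hB
    have hA' := isTwoRun_twoRunPerm A
    have hB' := isTwoRun_twoRunPerm B
    have hcard : #A = #B := by
      have := hA'.descents_eq hA.2
      rw [hAB, hB'.descents_eq hB.2, singleton_inj] at this
      have := card_pos.2 ⟨0, hA.1⟩
      have := card_pos.2 ⟨0, hB.1⟩
      omega
    ext v
    rw [hA'.mem_iff, hB'.mem_iff, hAB, hcard]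
  · simp only [mem_filter, mem_univ, true_and] at hσ ⊢
    obtain ⟨k, hk⟩ := card_eq_one.1 (desNum_eq_card_descents σ ▸ hσ.2)
    obtain ⟨A, hA⟩ := exists_isTwoRun hk
    have hpos : 0 < #A := by
      have := hA.2 k (by simp [hk])
      omega
    refine ⟨A, ⟨hσ.1 ▸ (hA.1 0).2 hpos, fun hinit => ?_⟩, hA.eq_twoRunPerm.symm⟩
    have h1 : 1 = σ := (isTwoRun_one_iff.2 hinit).eq_twoRunPerm.trans hA.eq_twoRunPerm.symm
    rw [← h1, descents_one] at hk
    exact singleton_ne_empty k hk.symm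

lemma card_zero_mem : #{A : Finset (Fin n) | 0 ∈ A} = 2 ^ (n - 1) := by
  calc #{A : Finset (Fin n) | 0 ∈ A} = #(univ.erase (0 : Fin n)).powerset := by
        refine card_nbij' (·.erase 0) (insert 0) (fun A _ => ?_) (fun B _ => ?_)
          (fun A hA => ?_) fun B hB => ?_
        · exact mem_powerset.2 (erase_subset_erase _ (subset_univ A))
        · simp
        · exact insert_erase (mem_filter.1 hA).2
        · exact erase_insert fun h => by simpa using mem_powerset.1 hB h
    _ = 2 ^ (n - 1) := by simp [card_powerset]

lemma card_zero_mem_and_eq_initSeg : #{A : Finset (Fin n) | 0 ∈ A ∧ A = initSeg n #A} = n := by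
  calc #{A : Finset (Fin n) | 0 ∈ A ∧ A = initSeg n #A} = #(Icc 1 n) := by
        refine card_nbij' card (initSeg n) (fun A hA => ?_) (fun m hm => ?_)
          (fun A hA => ?_) fun m hm => ?_
        · rw [mem_coe, mem_filter] at hA
          rw [mem_coe, mem_Icc]
          exact ⟨card_pos.2 ⟨0, hA.2.1⟩, by simpa using card_le_univ A⟩
        · rw [mem_coe, mem_Icc] at hm
          rw [mem_coe, mem_filter, card_initSeg hm.2, mem_initSeg]
          exact ⟨mem_univ _, by rw [Fin.val_zero]; omega, rfl⟩
        · rw [mem_coe, mem_filter] at hA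
          exact hA.2.2.symm
        · rw [mem_coe, mem_Icc] at hm
          exact card_initSeg hm.2
    _ = n := by simp

lemma card_apply_zero_desNum_eq_one_add :
    #{σ : Perm (Fin n) | σ 0 = 0 ∧ desNum σ = 1} + n = 2 ^ (n - 1) := by
  have := card_filter_add_card_filter_not (s := univ.filter fun A : Finset (Fin n) => 0 ∈ A)
    fun A => A = initSeg n #A
  simp only [filter_filter] at this
  have h₁ := card_zero_mem (n := n)
  have h₂ := card_zero_mem_and_eq_initSeg (n := n)
  rw [card_apply_zero_desNum_eq_one, ← h₁, ← this, add_comm]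
  congr 1
  exact h₂.symm

lemma card_hasMatch_apply_zero_desNum_eq_one {p : ℕ} (hp : 4 ≤ p) :
    #{σ : Perm (Fin n) | HasMatch (tau132 p (by omega)) σ ∧ σ 0 = 0 ∧ desNum σ = 1}
      = n + 1 - p := by
  calc _ = #(Icc 1 (n + 1 - p)) := by
        refine (card_bij (fun k hk => swap (⟨k, by have := mem_Icc.1 hk; omega⟩ : Fin n)
          ⟨k + 1, by have := mem_Icc.1 hk; omega⟩) (fun k hk => ?_)
          (fun k hk l hl hkl => ?_) fun σ hσ => ?_).symm
        · rw [mem_Icc] at hk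
          simp only [mem_filter, mem_univ, true_and]
          refine ⟨hasMatch_swap (by omega) hk.1 (by omega), swap_apply_zero hk.1 _, ?_⟩
          rw [desNum_eq_card_descents, descents_swap, card_singleton]
        · have := congrArg descents hkl
          rwa [descents_swap, descents_swap, singleton_inj] at this
        · simp only [mem_filter, mem_univ, true_and] at hσ
          obtain ⟨k, hk⟩ := card_eq_one.1 (desNum_eq_card_descents σ ▸ hσ.2.2)
          obtain ⟨hkp, hk1, rfl⟩ := eq_swap_of_hasMatch hp hk hσ.1
          exact ⟨k, mem_Icc.2 ⟨hk1, by omega⟩, rfl⟩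
    _ = n + 1 - p := by simp

lemma card_not_hasMatch_apply_zero_desNum_eq_one_add {p : ℕ} (hp : 4 ≤ p) :
    #{σ : Perm (Fin n) | ¬ HasMatch (tau132 p (by omega)) σ ∧ σ 0 = 0 ∧ desNum σ = 1}
      + (n + 1 - p) + n = 2 ^ (n - 1) := by
  have hsplit := card_filter_add_card_filter_not
    (s := univ.filter fun σ : Perm (Fin n) => σ 0 = 0 ∧ desNum σ = 1)
    (HasMatch (tau132 p (by omega)))
  simp only [filter_filter] at hsplit
  rw [← card_apply_zero_desNum_eq_one_add, ← hsplit,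
    ← card_hasMatch_apply_zero_desNum_eq_one hp, add_comm #(filter _ _)]
  congr 3 <;> ext σ <;> simp only [mem_filter, mem_univ, true_and] <;> tauto

end Counting

lemma two_mul_le_two_pow_sub_one {m : ℕ} (hm : 4 ≤ m) : 2 * m ≤ 2 ^ (m - 1) := by
  obtain ⟨m, rfl⟩ := Nat.exists_eq_add_of_le hm
  have := Nat.lt_two_pow_self (n := m)
  rw [show 4 + m - 1 = m + 3 by omega, pow_add]
  omega

end OneDescent

open OneDescent

/-- For `p ≥ 4` and `n ≥ 1`, the number of permutations of `S_n` with no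
`1324⋯p`-match, exactly one left-to-right minimum and exactly one descent equals
`2^{n-1} - n` if `n < p`, and `2^{n-1} - 2n + p - 1` if `n ≥ p`. -/
theorem count_nomatch_one_lrmin_one_descent (p : ℕ) (hp : 4 ≤ p) (n : ℕ) (hn : 1 ≤ n) :
    (Nat.card {σ : Equiv.Perm (Fin n) //
        ¬ HasMatch (tau132 p (by omega)) σ ∧ lrMin σ = 1 ∧ desNum σ = 1} : ℤ)
    = if n < p then 2 ^ (n - 1) - n else 2 ^ (n - 1) - 2 * n + p - 1 := by
  have : NeZero n := ⟨by omega⟩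
  have hcount := card_not_hasMatch_apply_zero_desNum_eq_one_add (n := n) hp
  -- The right-hand side elaborates in `ℕ` before the cast, so its subtractions truncate.
  simp only [Nat.card_eq_fintype_card, Fintype.card_subtype, lrMin_eq_one_iff, Nat.cast_inj]
  split_ifs with h
  · omega
  · have := two_mul_le_two_pow_sub_one (by omega : 4 ≤ n)
    omega
end
end
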